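/- arXiv:2308.02275 — 2 statements merged into one kernel-verified Lean document; each statement's English description precedes it below -/
import Mathlib

section
/- For any positive integer N and any k ≥ 1, the (2k+1)×(2k+1) tridiagonal matrix M = T(0,N,0,N,...,0,N,-1) (alternating diagonal entries 0 and N, ending with -1, and 1s on the secondary diagonals) has signature σ(M) = -1. -/
open Matrix Finset

/-- Tridiagonal real matrix with integer diagonal `d` and 1s on the secondary diagonals. -/
def tri (n : ℕ) (d : Fin n → ℤ) : Matrix (Fin n) (Fin n) ℝ :=
  Matrix.of fun i j =>
    if i = j then (d i : ℝ) else if (i : ℕ) + 1 = j ∨ (j : ℕ) + 1 = i then 1 else 0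

open scoped Classical in
/-- Signature of a real symmetric matrix: number of positive eigenvalues minus
number of negative eigenvalues (0 if the matrix is not symmetric). -/
noncomputable def sig {m : Type*} [Fintype m] [DecidableEq m] (M : Matrix m m ℝ) : ℤ :=
  if h : M.IsHermitian then
    ((Finset.univ.filter fun i => 0 < h.eigenvalues i).card : ℤ) -
      ((Finset.univ.filter fun i => h.eigenvalues i < 0).card : ℤ)
  else 0

open Module

section General

variable {ι : Type*} [Fintype ι] [DecidableEq ι]

lemma quad_unitary {M : Matrix ι ι ℝ} (hM : M.IsHermitian) (v : ι → ℝ) :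
    ((hM.eigenvectorUnitary : Matrix ι ι ℝ) *ᵥ v) ⬝ᵥ
      (M *ᵥ ((hM.eigenvectorUnitary : Matrix ι ι ℝ) *ᵥ v)) = ∑ i, hM.eigenvalues i * v i ^ 2 := by
  set U : Matrix ι ι ℝ := (hM.eigenvectorUnitary : Matrix ι ι ℝ) with hU
  have hsu : star U * U = 1 := Unitary.coe_star_mul_self hM.eigenvectorUnitary
  have hUt : Uᵀ = star U := by
    ext i j
    simp [Matrix.star_eq_conjTranspose, Matrix.conjTranspose_apply]
  conv_lhs => rw [hM.spectral_theorem, Unitary.conjStarAlgAut_apply]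
  rw [mulVec_mulVec, mul_assoc, mul_assoc, hsu, mul_one, ← mulVec_mulVec,
    dotProduct_mulVec, ← Matrix.mulVec_transpose, hUt, mulVec_mulVec, hsu, one_mulVec]
  simp only [dotProduct, mulVec_diagonal]
  refine Finset.sum_congr rfl fun i _ => ?_
  simp [RCLike.ofReal]
  ring

lemma single_li : LinearIndependent ℝ (fun i : ι => Pi.single i (1:ℝ)) := by
  have h := (Pi.basisFun ℝ ι).linearIndependent
  have e : (fun i : ι => Pi.single i (1:ℝ)) = ⇑(Pi.basisFun ℝ ι) := by
    funext i; rw [Pi.basisFun_apply]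
  rw [e]; exact h

lemma finrank_span_single (P : ι → Prop) [DecidablePred P] :
    finrank ℝ (Submodule.span ℝ (Set.range fun i : {i // P i} => (Pi.single (i : ι) 1 : ι → ℝ)))
      = Fintype.card {i // P i} :=
  finrank_span_eq_card (single_li.comp _ Subtype.coe_injective)

lemma span_single_vanish {P : ι → Prop} {x : ι → ℝ}
    (hx : x ∈ Submodule.span ℝ (Set.range fun i : {i // P i} => (Pi.single (i : ι) 1 : ι → ℝ)))
    {i : ι} (hi : ¬ P i) : x i = 0 := by
  have hle : Submodule.span ℝ (Set.range fun i : {i // P i} => (Pi.single (i : ι) 1 : ι → ℝ)) ≤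
      LinearMap.ker (LinearMap.pi fun j : {j // ¬ P j} => LinearMap.proj (R := ℝ)
        (φ := fun _ : ι => ℝ) (j : ι)) := by
    rw [Submodule.span_le]
    rintro _ ⟨j, rfl⟩
    simp only [SetLike.mem_coe, LinearMap.mem_ker]
    ext l
    simp only [LinearMap.pi_apply, LinearMap.proj_apply, Pi.zero_apply]
    refine Pi.single_eq_of_ne (fun h => l.2 ?_) 1
    rw [h]; exact j.2
  have h2 := hle hx
  rw [LinearMap.mem_ker] at h2
  exact congrFun h2 ⟨i, hi⟩

lemma finrank_le_card_pos {M : Matrix ι ι ℝ} (hM : M.IsHermitian) (W : Submodule ℝ (ι → ℝ))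
    (hW : ∀ x ∈ W, x ≠ 0 → 0 < x ⬝ᵥ (M *ᵥ x)) :
    finrank ℝ W ≤ (univ.filter fun i => 0 < hM.eigenvalues i).card := by
  set μ := hM.eigenvalues with hμ
  set U : Matrix ι ι ℝ := (hM.eigenvectorUnitary : Matrix ι ι ℝ) with hU
  have hsu : star U * U = 1 := Unitary.coe_star_mul_self hM.eigenvectorUnitary
  have hus : U * star U = 1 := Unitary.coe_mul_star_self hM.eigenvectorUnitary
  let e : (ι → ℝ) ≃ₗ[ℝ] (ι → ℝ) :=
    LinearEquiv.ofLinear (mulVecLin U) (mulVecLin (star U))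
      (by rw [← Matrix.mulVecLin_mul, hus, Matrix.mulVecLin_one])
      (by rw [← Matrix.mulVecLin_mul, hsu, Matrix.mulVecLin_one])
  set V0 := Submodule.span ℝ
    (Set.range fun i : {i // ¬ 0 < μ i} => (Pi.single (i : ι) 1 : ι → ℝ)) with hV0
  set V := Submodule.map (e : (ι → ℝ) →ₗ[ℝ] (ι → ℝ)) V0 with hV
  have hVrank : finrank ℝ V = Fintype.card {i // ¬ 0 < μ i} := by
    rw [hV, LinearEquiv.finrank_map_eq]
    exact finrank_span_single _
  have hVq : ∀ x ∈ V, x ⬝ᵥ (M *ᵥ x) ≤ 0 := by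
    rintro x hx
    obtain ⟨v, hv, rfl⟩ := Submodule.mem_map.1 hx
    have he : (e : (ι → ℝ) →ₗ[ℝ] (ι → ℝ)) v = U *ᵥ v := rfl
    rw [he, quad_unitary hM]
    apply Finset.sum_nonpos
    intro i _
    by_cases hi : 0 < μ i
    · rw [span_single_vanish hv (not_not_intro hi)]; simp
    · have h1 : μ i ≤ 0 := not_lt.1 hi
      have h2 : (0:ℝ) ≤ v i ^ 2 := sq_nonneg _
      exact mul_nonpos_of_nonpos_of_nonneg h1 h2
  have hdisj : W ⊓ V = ⊥ := by
    rw [Submodule.eq_bot_iff]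
    rintro x ⟨hxW, hxV⟩
    by_contra hne
    exact absurd (hW x hxW hne) (not_lt.2 (hVq x hxV))
  have hsum := Submodule.finrank_sup_add_finrank_inf_eq W V
  rw [hdisj, finrank_bot] at hsum
  have h1 : finrank ℝ ↥(W ⊔ V) ≤ Fintype.card ι :=
    le_trans (Submodule.finrank_le _) (le_of_eq (finrank_pi ℝ))
  have h2 : Fintype.card {i // ¬ 0 < μ i} = (univ.filter fun i => ¬ 0 < μ i).card :=
    Fintype.card_subtype _
  have h3 := Finset.card_filter_add_card_filter_not (s := (univ : Finset ι))
    (fun i => 0 < μ i)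
  rw [Finset.card_univ] at h3
  omega

lemma finrank_le_card_neg {M : Matrix ι ι ℝ} (hM : M.IsHermitian) (W : Submodule ℝ (ι → ℝ))
    (hW : ∀ x ∈ W, x ≠ 0 → x ⬝ᵥ (M *ᵥ x) < 0) :
    finrank ℝ W ≤ (univ.filter fun i => hM.eigenvalues i < 0).card := by
  set μ := hM.eigenvalues with hμ
  set U : Matrix ι ι ℝ := (hM.eigenvectorUnitary : Matrix ι ι ℝ) with hU
  have hsu : star U * U = 1 := Unitary.coe_star_mul_self hM.eigenvectorUnitary
  have hus : U * star U = 1 := Unitary.coe_mul_star_self hM.eigenvectorUnitary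
  let e : (ι → ℝ) ≃ₗ[ℝ] (ι → ℝ) :=
    LinearEquiv.ofLinear (mulVecLin U) (mulVecLin (star U))
      (by rw [← Matrix.mulVecLin_mul, hus, Matrix.mulVecLin_one])
      (by rw [← Matrix.mulVecLin_mul, hsu, Matrix.mulVecLin_one])
  set V0 := Submodule.span ℝ
    (Set.range fun i : {i // ¬ μ i < 0} => (Pi.single (i : ι) 1 : ι → ℝ)) with hV0
  set V := Submodule.map (e : (ι → ℝ) →ₗ[ℝ] (ι → ℝ)) V0 with hV
  have hVrank : finrank ℝ V = Fintype.card {i // ¬ μ i < 0} := by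
    rw [hV, LinearEquiv.finrank_map_eq]
    exact finrank_span_single _
  have hVq : ∀ x ∈ V, 0 ≤ x ⬝ᵥ (M *ᵥ x) := by
    rintro x hx
    obtain ⟨v, hv, rfl⟩ := Submodule.mem_map.1 hx
    have he : (e : (ι → ℝ) →ₗ[ℝ] (ι → ℝ)) v = U *ᵥ v := rfl
    rw [he, quad_unitary hM]
    apply Finset.sum_nonneg
    intro i _
    by_cases hi : μ i < 0
    · rw [span_single_vanish hv (not_not_intro hi)]; simp
    · exact mul_nonneg (not_lt.1 hi) (sq_nonneg _)
  have hdisj : W ⊓ V = ⊥ := by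
    rw [Submodule.eq_bot_iff]
    rintro x ⟨hxW, hxV⟩
    by_contra hne
    exact absurd (hW x hxW hne) (not_lt.2 (hVq x hxV))
  have hsum := Submodule.finrank_sup_add_finrank_inf_eq W V
  rw [hdisj, finrank_bot] at hsum
  have h1 : finrank ℝ ↥(W ⊔ V) ≤ Fintype.card ι :=
    le_trans (Submodule.finrank_le _) (le_of_eq (finrank_pi ℝ))
  have h2 : Fintype.card {i // ¬ μ i < 0} = (univ.filter fun i => ¬ μ i < 0).card :=
    Fintype.card_subtype _
  have h3 := Finset.card_filter_add_card_filter_not (s := (univ : Finset ι))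
    (fun i => μ i < 0)
  rw [Finset.card_univ] at h3
  omega

end General
def pad (m : ℕ) (x : Fin m → ℝ) : ℕ → ℝ := fun i => if h : i < m then x ⟨i, h⟩ else 0

def padi (m : ℕ) (d : Fin m → ℤ) : ℕ → ℝ := fun i => if h : i < m then (d ⟨i, h⟩ : ℝ) else 0

lemma tri_entry_mul (m : ℕ) (d : Fin m → ℤ) (x : Fin m → ℝ) (i j : Fin m) :
    tri m d i j * x j =
      (if j = i then (d i : ℝ) * x j else 0) +
      ((if (j : ℕ) = (i : ℕ) + 1 then x j else 0) +
       (if (j : ℕ) + 1 = (i : ℕ) then x j else 0)) := by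
  simp only [tri, Matrix.of_apply, Fin.ext_iff]
  split_ifs <;> first | ring1 | (exfalso; omega)


lemma tri_row (m : ℕ) (d : Fin m → ℤ) (x : Fin m → ℝ) (i : Fin m) :
    (tri m d *ᵥ x) i = (d i : ℝ) * x i + pad m x ((i : ℕ) + 1) +
      (if (i : ℕ) = 0 then 0 else pad m x ((i : ℕ) - 1)) := by
  have h0 : (tri m d *ᵥ x) i = ∑ j, tri m d i j * x j := rfl
  have hA : ∑ j : Fin m, (if j = i then (d i : ℝ) * x j else 0) = (d i : ℝ) * x i := by
    rw [Finset.sum_ite_eq' univ i (fun j => (d i : ℝ) * x j), if_pos (mem_univ i)]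
  have hB : ∑ j : Fin m, (if (j : ℕ) = (i : ℕ) + 1 then x j else 0) = pad m x ((i : ℕ) + 1) := by
    by_cases h : (i : ℕ) + 1 < m
    · have hpad : pad m x ((i : ℕ) + 1) = x ⟨(i : ℕ) + 1, h⟩ := dif_pos h
      have hs : ∑ j : Fin m, (if (j : ℕ) = (i : ℕ) + 1 then x j else 0)
          = ∑ j : Fin m, (if j = (⟨(i : ℕ) + 1, h⟩ : Fin m) then x j else 0) := by
        refine Finset.sum_congr rfl fun j _ => if_congr ?_ rfl rfl
        rw [Fin.ext_iff]
      rw [hpad, hs, Finset.sum_ite_eq' univ _ (fun j => x j), if_pos (mem_univ _)]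
    · have hpad : pad m x ((i : ℕ) + 1) = 0 := dif_neg h
      rw [hpad]
      exact Finset.sum_eq_zero fun j _ => if_neg (by omega)
  have hC : ∑ j : Fin m, (if (j : ℕ) + 1 = (i : ℕ) then x j else 0)
      = (if (i : ℕ) = 0 then 0 else pad m x ((i : ℕ) - 1)) := by
    by_cases h : (i : ℕ) = 0
    · rw [if_pos h]
      exact Finset.sum_eq_zero fun j _ => if_neg (by omega)
    · have hm : (i : ℕ) - 1 < m := by omega
      rw [if_neg h]
      have hpad : pad m x ((i : ℕ) - 1) = x ⟨(i : ℕ) - 1, hm⟩ := dif_pos hm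
      have hs : ∑ j : Fin m, (if (j : ℕ) + 1 = (i : ℕ) then x j else 0)
          = ∑ j : Fin m, (if j = (⟨(i : ℕ) - 1, hm⟩ : Fin m) then x j else 0) := by
        refine Finset.sum_congr rfl fun j _ => if_congr ?_ rfl rfl
        simp only [Fin.ext_iff, Fin.val_mk]
        omega
      rw [hpad, hs, Finset.sum_ite_eq' univ _ (fun j => x j), if_pos (mem_univ _)]
  rw [h0, Finset.sum_congr rfl fun j _ => tri_entry_mul m d x i j,
    Finset.sum_add_distrib, Finset.sum_add_distrib, hA, hB, hC, ← add_assoc]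

lemma tri_quad (m : ℕ) (d : Fin m → ℤ) (x : Fin m → ℝ) :
    x ⬝ᵥ (tri m d *ᵥ x) = (∑ i ∈ range m, padi m d i * pad m x i ^ 2)
      + 2 * ∑ i ∈ range (m - 1), pad m x i * pad m x (i + 1) := by
  have h0 : x ⬝ᵥ (tri m d *ᵥ x) = ∑ i : Fin m, x i * (tri m d *ᵥ x) i := rfl
  set g : ℕ → ℝ := fun n => padi m d n * pad m x n ^ 2 + pad m x n * pad m x (n + 1) +
      (if n = 0 then 0 else pad m x n * pad m x (n - 1)) with hg
  have h1 : ∀ i : Fin m, x i * (tri m d *ᵥ x) i = g (i : ℕ) := by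
    intro i
    rw [tri_row]
    have hx : pad m x (i : ℕ) = x i := by
      rw [pad, dif_pos i.isLt]
    have hd : padi m d (i : ℕ) = (d i : ℝ) := by
      rw [padi, dif_pos i.isLt]
    rw [hg]
    simp only [hx, hd]
    by_cases h : (i : ℕ) = 0
    · rw [if_pos h, if_pos h]; ring
    · rw [if_neg h, if_neg h]; ring
  rw [h0, Finset.sum_congr rfl fun i _ => h1 i, Fin.sum_univ_eq_sum_range g m, hg]
  rw [Finset.sum_add_distrib, Finset.sum_add_distrib]
  have h4 : ∑ n ∈ range m, pad m x n * pad m x (n + 1)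
      = ∑ n ∈ range (m - 1), pad m x n * pad m x (n + 1) := by
    cases m with
    | zero => rfl
    | succ s =>
      rw [Finset.sum_range_succ, show (s + 1 - 1) = s from rfl,
        show pad (s+1) x (s + 1) = 0 from dif_neg (by omega), mul_zero, add_zero]
  have h5 : ∑ n ∈ range m, (if n = 0 then 0 else pad m x n * pad m x (n - 1))
      = ∑ n ∈ range (m - 1), pad m x n * pad m x (n + 1) := by
    cases m with
    | zero => rfl
    | succ s =>
      rw [Finset.sum_range_succ'
        (fun n => if n = 0 then 0 else pad (s+1) x n * pad (s+1) x (n - 1)) s]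
      have hf0 : (if (0:ℕ) = 0 then (0:ℝ) else pad (s+1) x 0 * pad (s+1) x (0-1)) = 0 :=
        if_pos rfl
      rw [hf0, add_zero, show (s + 1 - 1) = s from rfl]
      refine Finset.sum_congr rfl fun n _ => ?_
      rw [if_neg (Nat.succ_ne_zero n), Nat.add_sub_cancel]
      ring
  rw [h4, h5]
  ring

lemma sum_pair {A : Type*} [AddCommMonoid A] (f : ℕ → A) (k : ℕ) :
    ∑ i ∈ range (2 * k), f i = ∑ j ∈ range k, (f (2 * j) + f (2 * j + 1)) := by
  induction k with
  | zero => rfl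
  | succ s ih =>
    rw [show 2 * (s + 1) = (2 * s + 1) + 1 from by ring, Finset.sum_range_succ,
      Finset.sum_range_succ, ih, Finset.sum_range_succ, add_assoc]

lemma tri_isHermitian (m : ℕ) (d : Fin m → ℤ) : (tri m d).IsHermitian := by
  rw [Matrix.IsHermitian]
  ext i j
  simp only [Matrix.conjTranspose_apply, tri, Matrix.of_apply, star_trivial]
  by_cases h : i = j
  · subst h; simp
  · rw [if_neg (fun hh => h hh.symm), if_neg h]
    exact if_congr or_comm rfl rfl

lemma tri_quad_spec (N : ℤ) (k : ℕ) (x : Fin (2*k+1) → ℝ) :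
    x ⬝ᵥ (tri (2*k+1)
        (fun i => if (i:ℕ) = 2*k then -1 else if (i:ℕ) % 2 = 0 then 0 else N) *ᵥ x)
      = (∑ j ∈ range k, ((N:ℝ) * pad (2*k+1) x (2*j+1)^2
          + 2 * pad (2*k+1) x (2*j+1) * (pad (2*k+1) x (2*j) + pad (2*k+1) x (2*j+2))))
        - pad (2*k+1) x (2*k)^2 := by
  set d : Fin (2*k+1) → ℤ :=
    fun i => if (i:ℕ) = 2*k then -1 else if (i:ℕ) % 2 = 0 then 0 else N with hdd
  set X := pad (2*k+1) x with hX
  rw [tri_quad]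
  have hpadi : ∀ i : ℕ, i < 2*k+1 → padi (2*k+1) d i =
      (if i = 2*k then -1 else if i % 2 = 0 then 0 else (N:ℝ)) := by
    intro i hi
    rw [padi, dif_pos hi, hdd]
    simp only [Fin.val_mk]
    split_ifs <;> push_cast <;> ring
  have hd : ∑ i ∈ range (2*k+1), padi (2*k+1) d i * X i ^ 2
      = (∑ j ∈ range k, (N:ℝ) * X (2*j+1)^2) - X (2*k)^2 := by
    rw [Finset.sum_range_succ, sum_pair (fun i => padi (2*k+1) d i * X i ^ 2) k]
    have hlast : padi (2*k+1) d (2*k) = -1 := by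
      rw [hpadi _ (by omega), if_pos rfl]
    have hterm : ∀ j ∈ range k, padi (2*k+1) d (2*j) * X (2*j) ^ 2
        + padi (2*k+1) d (2*j+1) * X (2*j+1) ^ 2 = (N:ℝ) * X (2*j+1)^2 := by
      intro j hj
      rw [Finset.mem_range] at hj
      rw [hpadi _ (by omega), hpadi _ (by omega), if_neg (by omega), if_pos (by omega),
        if_neg (by omega), if_neg (by omega)]
      ring
    rw [Finset.sum_congr rfl hterm, hlast]
    ring
  have hoff : ∑ i ∈ range (2*k+1-1), X i * X (i+1)
      = ∑ j ∈ range k, (X (2*j) * X (2*j+1) + X (2*j+1) * X (2*j+2)) := by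
    rw [show 2*k+1-1 = 2*k from rfl, sum_pair (fun i => X i * X (i+1)) k]
  have h2 : ∑ j ∈ range k, 2 * X (2*j+1) * (X (2*j) + X (2*j+2))
      = 2 * (∑ j ∈ range k, X (2*j) * X (2*j+1) + ∑ j ∈ range k, X (2*j+1) * X (2*j+2)) := by
    rw [← Finset.sum_add_distrib, Finset.mul_sum]
    exact Finset.sum_congr rfl fun j _ => by ring
  have h3 : ∑ j ∈ range k, ((N:ℝ) * X (2*j+1)^2 + 2 * X (2*j+1) * (X (2*j) + X (2*j+2)))
      = (∑ j ∈ range k, (N:ℝ) * X (2*j+1)^2)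
        + ∑ j ∈ range k, 2 * X (2*j+1) * (X (2*j) + X (2*j+2)) := Finset.sum_add_distrib
  have h4 : ∑ j ∈ range k, (X (2*j) * X (2*j+1) + X (2*j+1) * X (2*j+2))
      = (∑ j ∈ range k, X (2*j) * X (2*j+1))
        + ∑ j ∈ range k, X (2*j+1) * X (2*j+2) := Finset.sum_add_distrib
  rw [hd, hoff, h3, h2, h4]
  ring

noncomputable def Lmap (N : ℤ) (k : ℕ) : (Fin (2*k+1) → ℝ) →ₗ[ℝ] (Fin k → ℝ) where
  toFun := fun x j => (N:ℝ) * x ⟨2*(j:ℕ)+1, by omega⟩ + x ⟨2*(j:ℕ), by omega⟩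
      + x ⟨2*(j:ℕ)+2, by omega⟩
  map_add' := by intro a b; funext j; simp only [Pi.add_apply]; ring
  map_smul' := by
    intro c a; funext j
    simp only [Pi.smul_apply, smul_eq_mul, RingHom.id_apply]
    ring

theorem sig_alternating_tri (N : ℤ) (hN : 0 < N) (k : ℕ) (hk : 1 ≤ k) :
    sig (tri (2 * k + 1)
      (fun i => if (i : ℕ) = 2 * k then -1 else if (i : ℕ) % 2 = 0 then 0 else N)) = -1 := by
  set d : Fin (2*k+1) → ℤ :=
    fun i => if (i : ℕ) = 2 * k then -1 else if (i : ℕ) % 2 = 0 then 0 else N with hdd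
  set M := tri (2*k+1) d with hMdef
  have hherm : M.IsHermitian := tri_isHermitian _ _
  have hNR : (0:ℝ) < (N:ℝ) := by exact_mod_cast hN
  -- pads of coordinates
  have hpadx : ∀ (x : Fin (2*k+1) → ℝ) (i : Fin (2*k+1)), pad (2*k+1) x (i : ℕ) = x i := by
    intro x i
    rw [pad, dif_pos i.isLt]
  -- W : the strictly positive subspace (odd coordinates)
  set P : Fin (2*k+1) → Prop := fun i => (i : ℕ) % 2 = 1 with hP
  set W := Submodule.span ℝ
    (Set.range fun i : {i // P i} => (Pi.single (i : Fin (2*k+1)) 1 : Fin (2*k+1) → ℝ)) with hW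
  have hWrank : finrank ℝ W = k := by
    rw [hW, finrank_span_single P, Fintype.card_subtype, Finset.card_filter,
      Fin.sum_univ_eq_sum_range (fun i => if i % 2 = 1 then 1 else 0) (2*k+1),
      Finset.sum_range_succ, if_neg (by omega), add_zero,
      sum_pair (fun i => if i % 2 = 1 then (1:ℕ) else 0) k,
      Finset.sum_congr rfl (fun j (_ : j ∈ range k) => show
        (if (2*j) % 2 = 1 then (1:ℕ) else 0) + (if (2*j+1) % 2 = 1 then 1 else 0) = 1 from by
          rw [if_neg (by omega), if_pos (by omega)]),
      Finset.sum_const, Finset.card_range, smul_eq_mul, mul_one]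
  have hWpos : ∀ x ∈ W, x ≠ 0 → 0 < x ⬝ᵥ (M *ᵥ x) := by
    intro x hx hne
    have heven : ∀ i : Fin (2*k+1), (i : ℕ) % 2 = 0 → x i = 0 := by
      intro i hi
      exact span_single_vanish hx (by rw [hP]; omega)
    have hpe : ∀ n, n % 2 = 0 → pad (2*k+1) x n = 0 := by
      intro n hn
      rw [pad]
      split_ifs with h
      · exact heven ⟨n, h⟩ hn
      · rfl
    rw [hMdef, tri_quad_spec, Finset.sum_congr rfl (fun j (_ : j ∈ range k) => show
        (N:ℝ) * pad (2*k+1) x (2*j+1)^2 + 2 * pad (2*k+1) x (2*j+1) *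
          (pad (2*k+1) x (2*j) + pad (2*k+1) x (2*j+2))
        = (N:ℝ) * pad (2*k+1) x (2*j+1)^2 from by
          rw [hpe (2*j) (by omega), hpe (2*j+2) (by omega)]; ring),
      hpe (2*k) (by omega)]
    obtain ⟨i, hi⟩ := Function.ne_iff.1 hne
    have hine : x i ≠ 0 := by simpa using hi
    have hiodd : (i : ℕ) % 2 = 1 := by
      by_contra hcon
      exact hine (heven i (by omega))
    have hjlt : (i : ℕ) / 2 < k := by omega
    have hXi : pad (2*k+1) x (2*((i:ℕ)/2)+1) = x i := by
      rw [show 2*((i:ℕ)/2)+1 = (i : ℕ) by omega]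
      exact hpadx x i
    have hpos : 0 < ∑ j ∈ range k, (N:ℝ) * pad (2*k+1) x (2*j+1)^2 := by
      refine Finset.sum_pos' (fun j _ => by positivity) ⟨(i:ℕ)/2, Finset.mem_range.2 hjlt, ?_⟩
      rw [hXi]
      have := mul_self_pos.2 hine
      have hsq : 0 < x i ^ 2 := by nlinarith
      exact mul_pos hNR hsq
    nlinarith
  -- U : the strictly negative subspace
  have hUrank : k + 1 ≤ finrank ℝ (LinearMap.ker (Lmap N k)) := by
    have h1 := LinearMap.finrank_range_add_finrank_ker (Lmap N k)
    have h2 : finrank ℝ (Fin (2*k+1) → ℝ) = 2*k+1 := by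
      rw [finrank_pi, Fintype.card_fin]
    have h3 : finrank ℝ (LinearMap.range (Lmap N k)) ≤ k := by
      refine le_trans (Submodule.finrank_le _) ?_
      rw [finrank_pi, Fintype.card_fin]
    omega
  have hUneg : ∀ x ∈ LinearMap.ker (Lmap N k), x ≠ 0 → x ⬝ᵥ (M *ᵥ x) < 0 := by
    intro x hx hne
    have hcon : ∀ j, j < k →
        (N:ℝ) * pad (2*k+1) x (2*j+1) + pad (2*k+1) x (2*j) + pad (2*k+1) x (2*j+2) = 0 := by
      intro j hj
      have h0 := congrFun (LinearMap.mem_ker.1 hx) ⟨j, hj⟩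
      have h1 : (N:ℝ) * x ⟨2*j+1, by omega⟩ + x ⟨2*j, by omega⟩ + x ⟨2*j+2, by omega⟩ = 0 := h0
      rw [pad, pad, pad, dif_pos (by omega : 2*j+1 < 2*k+1), dif_pos (by omega : 2*j < 2*k+1),
        dif_pos (by omega : 2*j+2 < 2*k+1)]
      exact h1
    rw [hMdef, tri_quad_spec, Finset.sum_congr rfl (fun j hj => show
        (N:ℝ) * pad (2*k+1) x (2*j+1)^2 + 2 * pad (2*k+1) x (2*j+1) *
          (pad (2*k+1) x (2*j) + pad (2*k+1) x (2*j+2))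
        = -((N:ℝ) * pad (2*k+1) x (2*j+1)^2) from by
          have h := hcon j (Finset.mem_range.1 hj)
          have h2 : pad (2*k+1) x (2*j) + pad (2*k+1) x (2*j+2)
              = -((N:ℝ) * pad (2*k+1) x (2*j+1)) := by linarith
          rw [h2]; ring)]
    have hS : 0 < (∑ j ∈ range k, (N:ℝ) * pad (2*k+1) x (2*j+1)^2) + pad (2*k+1) x (2*k)^2 := by
      have hterm_nn : ∀ j ∈ range k, (0:ℝ) ≤ (N:ℝ) * pad (2*k+1) x (2*j+1)^2 :=
        fun j _ => by positivity
      have hsum_nn : (0:ℝ) ≤ ∑ j ∈ range k, (N:ℝ) * pad (2*k+1) x (2*j+1)^2 :=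
        Finset.sum_nonneg hterm_nn
      have hsq_nn : (0:ℝ) ≤ pad (2*k+1) x (2*k)^2 := sq_nonneg _
      rcases eq_or_lt_of_le (by linarith :
          (0:ℝ) ≤ (∑ j ∈ range k, (N:ℝ) * pad (2*k+1) x (2*j+1)^2) + pad (2*k+1) x (2*k)^2)
        with heq | hlt
      · exfalso
        have hsum0 : ∑ j ∈ range k, (N:ℝ) * pad (2*k+1) x (2*j+1)^2 = 0 := by linarith
        have hsq0 : pad (2*k+1) x (2*k) = 0 := by
          have : pad (2*k+1) x (2*k)^2 = 0 := by linarith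
          exact pow_eq_zero_iff (by omega) |>.1 this
        have hodd : ∀ j, j < k → pad (2*k+1) x (2*j+1) = 0 := by
          intro j hj
          have := (Finset.sum_eq_zero_iff_of_nonneg hterm_nn).1 hsum0 j (Finset.mem_range.2 hj)
          have hsq : pad (2*k+1) x (2*j+1)^2 = 0 := by
            rcases mul_eq_zero.1 this with h | h
            · exact absurd h (by exact_mod_cast hN.ne')
            · exact h
          exact pow_eq_zero_iff (by omega) |>.1 hsq
        have hevenz : ∀ t, t ≤ k → pad (2*k+1) x (2*(k-t)) = 0 := by
          intro t
          induction t with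
          | zero => intro _; simpa using hsq0
          | succ s ih =>
            intro hs
            have hj : k - s - 1 < k := by omega
            have hc := hcon (k-s-1) hj
            have ho := hodd (k-s-1) hj
            have h2 : 2*(k-s-1)+2 = 2*(k-s) := by omega
            have hprev := ih (by omega)
            rw [ho, h2, hprev] at hc
            have : pad (2*k+1) x (2*(k-s-1)) = 0 := by linarith
            rw [show k - (s+1) = k - s - 1 by omega]
            exact this
        apply hne
        funext i
        have hxi : x i = pad (2*k+1) x (i : ℕ) := (hpadx x i).symm
        rcases Nat.even_or_odd (i : ℕ) with he | ho
        · have h1 : (i : ℕ) % 2 = 0 := by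
            rcases he with ⟨r, hr⟩; omega
          have h2 : (i : ℕ) / 2 ≤ k := by omega
          have := hevenz (k - (i:ℕ)/2) (by omega)
          rw [show 2*(k - (k - (i:ℕ)/2)) = (i : ℕ) by omega] at this
          rw [hxi, this]; rfl
        · have h1 : (i : ℕ) % 2 = 1 := by
            rcases ho with ⟨r, hr⟩; omega
          have hjj : (i : ℕ) / 2 < k := by omega
          have := hodd ((i:ℕ)/2) hjj
          rw [show 2*((i:ℕ)/2)+1 = (i : ℕ) by omega] at this
          rw [hxi, this]; rfl
      · exact hlt
    have : ∑ j ∈ range k, -((N:ℝ) * pad (2*k+1) x (2*j+1)^2)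
        = -∑ j ∈ range k, (N:ℝ) * pad (2*k+1) x (2*j+1)^2 := by
      rw [Finset.sum_neg_distrib]
    rw [this]
    linarith
  -- combine
  have hple := finrank_le_card_pos hherm W hWpos
  rw [hWrank] at hple
  have hnle := le_trans hUrank (finrank_le_card_neg hherm (LinearMap.ker (Lmap N k)) hUneg)
  have hdisj : Disjoint (univ.filter fun i => 0 < hherm.eigenvalues i)
      (univ.filter fun i => hherm.eigenvalues i < 0) := by
    rw [Finset.disjoint_left]
    intro a ha hb
    rw [Finset.mem_filter] at ha hb
    linarith [ha.2, hb.2]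
  have hsumle : (univ.filter fun i => 0 < hherm.eigenvalues i).card
      + (univ.filter fun i => hherm.eigenvalues i < 0).card ≤ 2*k+1 := by
    rw [← Finset.card_union_of_disjoint hdisj]
    refine le_trans (Finset.card_le_univ _) ?_
    rw [Fintype.card_fin]
  rw [sig, dif_pos hherm]
  have e1 : (Finset.univ.filter fun i => 0 < hherm.eigenvalues i).card
      = (univ.filter fun i => 0 < hherm.eigenvalues i).card := by
    congr 1
  have e2 : (Finset.univ.filter fun i => hherm.eigenvalues i < 0).card
      = (univ.filter fun i => hherm.eigenvalues i < 0).card := by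
    congr 1
  omega
end

section
/- Let M = T(2^a, 1, 2^b) with a, b ≥ 0 be the tridiagonal matrix whose diagonal consists of a twos, a one, and b twos, with 1s on the secondary diagonals. Then σ(M) = dim(M) if min(a,b) = 0; σ(M) = dim(M) - 1 if a = b = 1; and σ(M) = dim(M) - 2 otherwise. In particular, σ(M) ≥ (1/2)·dim(M) in all cases. -/
open Matrix Finset

lemma tri_herm (n : ℕ) (d : Fin n → ℤ) : (tri n d).IsHermitian := by
  ext i j
  simp only [conjTranspose_apply, tri, of_apply, star_trivial]
  rcases eq_or_ne i j with h | h
  · subst h; simp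
  · rw [if_neg (Ne.symm h), if_neg h]
    by_cases h2 : (i : ℕ) + 1 = j ∨ (j : ℕ) + 1 = i
    · rw [if_pos (Or.symm h2), if_pos h2]
    · rw [if_neg (fun hc => h2 (Or.symm hc)), if_neg h2]

/-- extension of a vector by zero -/
def ext0 {n : ℕ} (z : Fin n → ℝ) : ℕ → ℝ := fun i => if h : i < n then z ⟨i, h⟩ else 0

lemma ext0_coe {n : ℕ} (z : Fin n → ℝ) (i : Fin n) : ext0 z i = z i := by
  simp [ext0, i.isLt]

lemma ext0_of_lt {n : ℕ} (z : Fin n → ℝ) {i : ℕ} (h : i < n) : ext0 z i = z ⟨i, h⟩ := by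
  simp [ext0, h]

lemma ext0_of_ge {n : ℕ} (z : Fin n → ℝ) {i : ℕ} (h : n ≤ i) : ext0 z i = 0 := by
  simp [ext0, not_lt.mpr h]

lemma quad (a b : ℕ) (z : Fin (a + b + 1) → ℝ) :
    z ⬝ᵥ (tri (a + b + 1) (fun i => if (i : ℕ) = a then 1 else 2)) *ᵥ z
      = (∑ i ∈ range (a + b), (ext0 z i + ext0 z (i + 1)) ^ 2)
          + (ext0 z 0) ^ 2 + (ext0 z (a + b)) ^ 2 - (ext0 z a) ^ 2 := by
  set A : ℕ → ℕ → ℝ := fun i j =>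
    if i = j then (if i = a then (1 : ℝ) else 2)
    else if i + 1 = j ∨ j + 1 = i then 1 else 0 with hA
  have inner_eq : ∀ i : Fin (a + b + 1),
      ((tri (a + b + 1) (fun i => if (i : ℕ) = a then 1 else 2)) *ᵥ z) i
      = ∑ j ∈ range (a + b + 1), A (i : ℕ) j * ext0 z j := by
    intro i
    rw [mulVec, dotProduct,
      ← Fin.sum_univ_eq_sum_range (fun j => A (i : ℕ) j * ext0 z j) (a + b + 1)]
    refine Finset.sum_congr rfl fun j _ => ?_
    rw [ext0_coe]
    rcases eq_or_ne i j with h | h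
    · subst h; simp [tri, hA]
    · rw [show (tri (a + b + 1) (fun i => if (i : ℕ) = a then 1 else 2)) i j
          = if (i : ℕ) + 1 = j ∨ (j : ℕ) + 1 = i then 1 else 0 from by
            simp [tri, if_neg h],
        show A (i : ℕ) (j : ℕ)
          = if (i : ℕ) + 1 = j ∨ (j : ℕ) + 1 = i then 1 else 0 from by
            rw [hA]; exact if_neg (fun hc => h (Fin.ext hc))]
  have lhs_eq : z ⬝ᵥ (tri (a + b + 1) (fun i => if (i : ℕ) = a then 1 else 2)) *ᵥ z
      = ∑ i ∈ range (a + b + 1), ∑ j ∈ range (a + b + 1), ext0 z i * (A i j * ext0 z j) := by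
    rw [dotProduct, ← Fin.sum_univ_eq_sum_range
      (fun i => ∑ j ∈ range (a + b + 1), ext0 z i * (A i j * ext0 z j)) (a + b + 1)]
    refine Finset.sum_congr rfl fun i _ => ?_
    rw [inner_eq i, Finset.mul_sum, ext0_coe]
  rw [lhs_eq]
  have split : ∀ i ∈ range (a + b + 1), ∀ j ∈ range (a + b + 1), ext0 z i * (A i j * ext0 z j)
      = (if i = j then (if i = a then (1 : ℝ) else 2) * (ext0 z i * ext0 z j) else 0)
        + ((if i + 1 = j then ext0 z i * ext0 z j else 0)
            + (if j + 1 = i then ext0 z i * ext0 z j else 0)) := by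
    intro i _ j _
    simp only [hA]
    split_ifs <;> first | omega | ring
  rw [Finset.sum_congr rfl fun i hi => Finset.sum_congr rfl fun j hj => split i hi j hj]
  simp only [Finset.sum_add_distrib]
  have S1 : ∑ i ∈ range (a + b + 1), ∑ j ∈ range (a + b + 1),
      (if i = j then (if i = a then (1 : ℝ) else 2) * (ext0 z i * ext0 z j) else 0)
      = 2 * (∑ i ∈ range (a + b + 1), ext0 z i ^ 2) - ext0 z a ^ 2 := by
    have e1 : ∀ i ∈ range (a + b + 1), (∑ j ∈ range (a + b + 1),
        (if i = j then (if i = a then (1 : ℝ) else 2) * (ext0 z i * ext0 z j) else 0))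
        = 2 * ext0 z i ^ 2 - (if i = a then ext0 z i ^ 2 else 0) := by
      intro i hi
      rw [Finset.sum_ite_eq (range (a + b + 1)) i
        (fun j => (if i = a then (1 : ℝ) else 2) * (ext0 z i * ext0 z j)), if_pos hi]
      split_ifs <;> ring
    rw [Finset.sum_congr rfl e1, Finset.sum_sub_distrib,
      Finset.sum_ite_eq' (range (a + b + 1)) a (fun i => ext0 z i ^ 2),
      if_pos (by simp), Finset.mul_sum]
  have S2 : ∑ i ∈ range (a + b + 1), ∑ j ∈ range (a + b + 1),
      (if i + 1 = j then ext0 z i * ext0 z j else 0)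
      = ∑ i ∈ range (a + b + 1), ext0 z i * ext0 z (i + 1) := by
    refine Finset.sum_congr rfl fun i _ => ?_
    rw [Finset.sum_ite_eq (range (a + b + 1)) (i + 1) (fun j => ext0 z i * ext0 z j)]
    split_ifs with h
    · rfl
    · rw [ext0_of_ge z (i := i + 1) (by simp at h; omega), mul_zero]
  have S3 : ∑ i ∈ range (a + b + 1), ∑ j ∈ range (a + b + 1),
      (if j + 1 = i then ext0 z i * ext0 z j else 0)
      = ∑ i ∈ range (a + b + 1), ext0 z i * ext0 z (i + 1) := by
    rw [Finset.sum_comm]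
    refine Finset.sum_congr rfl fun j _ => ?_
    rw [Finset.sum_ite_eq (range (a + b + 1)) (j + 1) (fun i => ext0 z i * ext0 z j)]
    split_ifs with h
    · rw [mul_comm]
    · rw [ext0_of_ge z (i := j + 1) (by simp at h; omega)]; simp
  rw [S1, S2, S3]
  have T0 : ∑ i ∈ range (a + b + 1), ext0 z i * ext0 z (i + 1)
      = ∑ i ∈ range (a + b), ext0 z i * ext0 z (i + 1) := by
    rw [Finset.sum_range_succ, ext0_of_ge z (i := a + b + 1) (le_refl (a + b + 1)), mul_zero, add_zero]
  have T1 : ∑ i ∈ range (a + b), (ext0 z i + ext0 z (i + 1)) ^ 2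
      = (∑ i ∈ range (a + b), ext0 z i ^ 2) + (∑ i ∈ range (a + b), ext0 z (i + 1) ^ 2)
        + 2 * ∑ i ∈ range (a + b), ext0 z i * ext0 z (i + 1) := by
    rw [Finset.mul_sum, ← Finset.sum_add_distrib, ← Finset.sum_add_distrib]
    exact Finset.sum_congr rfl fun i _ => by ring
  have T2 : ∑ i ∈ range (a + b), ext0 z (i + 1) ^ 2
      = (∑ i ∈ range (a + b + 1), ext0 z i ^ 2) - ext0 z 0 ^ 2 := by
    rw [Finset.sum_range_succ']; ring
  have T3 : ∑ i ∈ range (a + b), ext0 z i ^ 2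
      = (∑ i ∈ range (a + b + 1), ext0 z i ^ 2) - ext0 z (a + b) ^ 2 := by
    rw [Finset.sum_range_succ]; ring
  rw [T0, T1, T2, T3]
  ring

-- chain lemmas and positivity, appended to s1 content for testing
lemma chain_fwd {n : ℕ} (e : ℕ → ℝ) (m : ℕ)
    (hs : ∀ i ∈ range m, (e i + e (i + 1)) ^ 2 = 0) (h0 : e 0 = 0) :
    ∀ i, i ≤ m → e i = 0 := by
  intro i
  induction i with
  | zero => exact fun _ => h0
  | succ i ih =>
    intro hi
    have h1 : (e i + e (i + 1)) ^ 2 = 0 := hs i (by simp; omega)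
    have h2 : e i = 0 := ih (by omega)
    have := pow_eq_zero_iff (n := 2) (by norm_num) |>.mp h1
    linarith

lemma chain_bwd (e : ℕ → ℝ) (m : ℕ)
    (hs : ∀ i ∈ range m, (e i + e (i + 1)) ^ 2 = 0) (hm : e m = 0) :
    ∀ k i, i + k = m → e i = 0 := by
  intro k
  induction k with
  | zero => intro i hi; rw [show i = m by omega]; exact hm
  | succ k ih =>
    intro i hi
    have h1 : (e i + e (i + 1)) ^ 2 = 0 := hs i (by simp; omega)
    have h2 : e (i + 1) = 0 := ih (i + 1) (by omega)
    have := pow_eq_zero_iff (n := 2) (by norm_num) |>.mp h1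
    linarith

/-- positivity of the form on the hyperplane `z a = 0` -/
lemma quad_pos (a b : ℕ) (z : Fin (a + b + 1) → ℝ) (hz : z ≠ 0)
    (hza : ext0 z a = 0) :
    0 < z ⬝ᵥ (tri (a + b + 1) (fun i => if (i : ℕ) = a then 1 else 2)) *ᵥ z := by
  rw [quad, hza]
  have hge : (0:ℝ) ≤ (∑ i ∈ range (a + b), (ext0 z i + ext0 z (i + 1)) ^ 2)
      + (ext0 z 0) ^ 2 + (ext0 z (a + b)) ^ 2 := by positivity
  rcases eq_or_lt_of_le hge with heq | hlt
  · exfalso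
    apply hz
    have hsumnn : (0:ℝ) ≤ ∑ i ∈ range (a + b), (ext0 z i + ext0 z (i + 1)) ^ 2 :=
      Finset.sum_nonneg fun i _ => sq_nonneg _
    have hS : ∑ i ∈ range (a + b), (ext0 z i + ext0 z (i + 1)) ^ 2 = 0 := by
      nlinarith [sq_nonneg (ext0 z 0), sq_nonneg (ext0 z (a + b))]
    have h0 : ext0 z 0 = 0 := by
      have : (ext0 z 0) ^ 2 = 0 := by nlinarith [sq_nonneg (ext0 z (a + b))]
      exact pow_eq_zero_iff (n := 2) (by norm_num) |>.mp this
    have hterm : ∀ i ∈ range (a + b), (ext0 z i + ext0 z (i + 1)) ^ 2 = 0 :=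
      (Finset.sum_eq_zero_iff_of_nonneg fun i _ => sq_nonneg _).mp hS
    have key := chain_fwd (n := a + b + 1) (ext0 z) (a + b) hterm h0
    funext i
    have := key i (by omega)
    rwa [ext0_coe] at this
  · linarith [sq_nonneg (ext0 z a), hlt]

lemma posdef_b0 (a : ℕ) :
    (tri (a + 0 + 1) (fun i => if (i : ℕ) = a then 1 else 2)).PosDef := by
  refine posDef_iff_dotProduct_mulVec.mpr ⟨tri_herm _ _, fun x hx => ?_⟩
  have hstar : star x = x := funext fun i => by simp
  rw [hstar, quad a 0 x]
  have h2 : ext0 x (a + 0) ^ 2 - ext0 x a ^ 2 = 0 := by norm_num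
  have hge : (0:ℝ) ≤ (∑ i ∈ range (a + 0), (ext0 x i + ext0 x (i + 1)) ^ 2)
      + (ext0 x 0) ^ 2 := by positivity
  rcases eq_or_lt_of_le hge with heq | hlt
  · exfalso
    apply hx
    have hS : ∑ i ∈ range (a + 0), (ext0 x i + ext0 x (i + 1)) ^ 2 = 0 := by
      nlinarith [Finset.sum_nonneg (fun i (_ : i ∈ range (a + 0)) =>
        sq_nonneg (ext0 x i + ext0 x (i + 1))), sq_nonneg (ext0 x 0)]
    have h0 : ext0 x 0 = 0 := by
      have : (ext0 x 0) ^ 2 = 0 := by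
        nlinarith [Finset.sum_nonneg (fun i (_ : i ∈ range (a + 0)) =>
          sq_nonneg (ext0 x i + ext0 x (i + 1)))]
      exact pow_eq_zero_iff (n := 2) (by norm_num) |>.mp this
    have hterm : ∀ i ∈ range (a + 0), (ext0 x i + ext0 x (i + 1)) ^ 2 = 0 :=
      (Finset.sum_eq_zero_iff_of_nonneg fun i _ => sq_nonneg _).mp hS
    have key := chain_fwd (n := a + 0 + 1) (ext0 x) (a + 0) hterm h0
    funext i
    have := key i (by omega)
    rwa [ext0_coe] at this
  · linarith

lemma posdef_a0 (b : ℕ) :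
    (tri (0 + b + 1) (fun i => if (i : ℕ) = 0 then 1 else 2)).PosDef := by
  refine posDef_iff_dotProduct_mulVec.mpr ⟨tri_herm _ _, fun x hx => ?_⟩
  have hstar : star x = x := funext fun i => by simp
  rw [hstar, quad 0 b x]
  have hge : (0:ℝ) ≤ (∑ i ∈ range (0 + b), (ext0 x i + ext0 x (i + 1)) ^ 2)
      + (ext0 x (0 + b)) ^ 2 := by positivity
  rcases eq_or_lt_of_le hge with heq | hlt
  · exfalso
    apply hx
    have hS : ∑ i ∈ range (0 + b), (ext0 x i + ext0 x (i + 1)) ^ 2 = 0 := by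
      nlinarith [Finset.sum_nonneg (fun i (_ : i ∈ range (0 + b)) =>
        sq_nonneg (ext0 x i + ext0 x (i + 1))), sq_nonneg (ext0 x (0 + b))]
    have hm : ext0 x (0 + b) = 0 := by
      have : (ext0 x (0 + b)) ^ 2 = 0 := by
        nlinarith [Finset.sum_nonneg (fun i (_ : i ∈ range (0 + b)) =>
          sq_nonneg (ext0 x i + ext0 x (i + 1)))]
      exact pow_eq_zero_iff (n := 2) (by norm_num) |>.mp this
    have hterm : ∀ i ∈ range (0 + b), (ext0 x i + ext0 x (i + 1)) ^ 2 = 0 :=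
      (Finset.sum_eq_zero_iff_of_nonneg fun i _ => sq_nonneg _).mp hS
    have key := chain_bwd (ext0 x) (0 + b) hterm hm
    funext i
    have := key (0 + b - (i : ℕ)) i (by omega)
    rwa [ext0_coe] at this
  · linarith

lemma basis_dot {n : ℕ} {M : Matrix (Fin n) (Fin n) ℝ} (hM : M.IsHermitian) (p q : Fin n) :
    (⇑(hM.eigenvectorBasis p) : Fin n → ℝ) ⬝ᵥ ⇑(hM.eigenvectorBasis q)
      = if p = q then 1 else 0 := by
  have h := orthonormal_iff_ite.mp hM.eigenvectorBasis.orthonormal p q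
  rw [PiLp.inner_apply] at h
  simpa [dotProduct, RCLike.inner_apply, conj_trivial, mul_comm] using h

lemma card_nonpos_le_one (a b : ℕ)
    (hM : (tri (a + b + 1) (fun i => if (i : ℕ) = a then 1 else 2)).IsHermitian) :
    (univ.filter fun i => hM.eigenvalues i ≤ 0).card ≤ 1 := by
  rw [Finset.card_le_one]
  intro i hi j hj
  simp only [mem_filter] at hi hj
  by_contra hij
  have ha : a < a + b + 1 := by omega
  set u : Fin (a + b + 1) → ℝ := ⇑(hM.eigenvectorBasis i) with hu
  set w : Fin (a + b + 1) → ℝ := ⇑(hM.eigenvectorBasis j) with hw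
  have hji : j ≠ i := fun h => hij h.symm
  have hMu : (tri (a + b + 1) (fun i => if (i : ℕ) = a then 1 else 2)) *ᵥ u
      = hM.eigenvalues i • u := hM.mulVec_eigenvectorBasis i
  have hMw : (tri (a + b + 1) (fun i => if (i : ℕ) = a then 1 else 2)) *ᵥ w
      = hM.eigenvalues j • w := hM.mulVec_eigenvectorBasis j
  have huu : u ⬝ᵥ u = 1 := by
    have h := basis_dot hM i i; rw [if_pos rfl] at h; exact h
  have hww : w ⬝ᵥ w = 1 := by
    have h := basis_dot hM j j; rw [if_pos rfl] at h; exact h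
  have huw : u ⬝ᵥ w = 0 := by
    have h := basis_dot hM i j; rw [if_neg hij] at h; exact h
  have hwu : w ⬝ᵥ u = 0 := by
    have h := basis_dot hM j i; rw [if_neg hji] at h; exact h
  set α := u ⟨a, ha⟩ with hα'
  set β := w ⟨a, ha⟩ with hβ'
  have hune : u ≠ 0 := fun h => by simp [h] at huu
  have hQu : u ⬝ᵥ (tri (a + b + 1) (fun i => if (i : ℕ) = a then 1 else 2)) *ᵥ u
      = hM.eigenvalues i := by
    rw [hMu, dotProduct_smul, smul_eq_mul, huu, mul_one]
  by_cases hA : α = 0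
  · have h1 := quad_pos a b u hune (by rw [ext0_of_lt u ha]; exact hA)
    rw [hQu] at h1
    linarith [hi.2]
  · set z : Fin (a + b + 1) → ℝ := β • u - α • w with hz
    have hz_a : ext0 z a = 0 := by
      rw [ext0_of_lt z ha]
      simp only [hz, Pi.sub_apply, Pi.smul_apply, smul_eq_mul]
      rw [← hα', ← hβ']; ring
    have hzw : z ⬝ᵥ w = -α := by
      rw [hz, sub_dotProduct, smul_dotProduct, smul_dotProduct, huw, hww, smul_eq_mul,
        smul_eq_mul]
      ring
    have hzne : z ≠ 0 := fun h => by
      rw [h, zero_dotProduct] at hzw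
      exact hA (by linarith)
    have hpos := quad_pos a b z hzne hz_a
    have hQz : z ⬝ᵥ (tri (a + b + 1) (fun i => if (i : ℕ) = a then 1 else 2)) *ᵥ z
        = β ^ 2 * hM.eigenvalues i + α ^ 2 * hM.eigenvalues j := by
      rw [hz, mulVec_sub, mulVec_smul, mulVec_smul, hMu, hMw]
      simp only [sub_dotProduct, dotProduct_sub, smul_dotProduct, dotProduct_smul,
        smul_eq_mul, huu, hww, huw, hwu]
      ring
    rw [hQz] at hpos
    nlinarith [sq_nonneg α, sq_nonneg β, hi.2, hj.2]

lemma neg_pow_sq (m : ℕ) : (((-1 : ℝ) ^ m) ^ 2) = 1 := by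
  rw [← pow_mul, mul_comm, pow_mul]; norm_num

lemma exists_neg_vec (a b : ℕ) (ha : 1 ≤ a) (hb : 1 ≤ b) (hab : 2 ≤ a * b) :
    ∃ x : Fin (a + b + 1) → ℝ,
      x ⬝ᵥ (tri (a + b + 1) (fun i => if (i : ℕ) = a then 1 else 2)) *ᵥ x < 0 := by
  set c : ℕ → ℝ := fun i => if i ≤ a then ((i : ℝ) + 1) * ((b : ℝ) + 1)
    else ((a : ℝ) + 1) * (((b : ℝ) + 1) - ((i : ℝ) - (a : ℝ))) with hc
  set X : Fin (a + b + 1) → ℝ := fun i => (-1 : ℝ) ^ (i : ℕ) * c i with hX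
  refine ⟨X, ?_⟩
  rw [quad a b X]
  have hx : ∀ i : ℕ, (h : i < a + b + 1) → ext0 X i = (-1 : ℝ) ^ i * c i := by
    intro i h
    rw [ext0_of_lt X h, hX]
  have hterm : ∀ i ∈ range (a + b),
      (ext0 X i + ext0 X (i + 1)) ^ 2 = (c i - c (i + 1)) ^ 2 := by
    intro i hi
    simp only [mem_range] at hi
    have hsum : ext0 X i + ext0 X (i + 1) = (-1 : ℝ) ^ i * (c i - c (i + 1)) := by
      rw [hx i (by omega), hx (i + 1) (by omega), pow_succ]; ring
    rw [hsum, mul_pow, neg_pow_sq, one_mul]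
  rw [Finset.sum_congr rfl hterm,
    ← Finset.sum_range_add_sum_Ico (fun i => (c i - c (i + 1)) ^ 2) (show a ≤ a + b by omega),
    Finset.sum_Ico_eq_sum_range]
  have hL : ∀ i ∈ range a, (c i - c (i + 1)) ^ 2 = ((b : ℝ) + 1) ^ 2 := by
    intro i hi
    simp only [mem_range] at hi
    rw [hc]
    simp only []
    rw [if_pos (show i ≤ a by omega), if_pos (show i + 1 ≤ a by omega)]
    push_cast; ring
  have hR : ∀ j ∈ range (a + b - a), (c (a + j) - c (a + j + 1)) ^ 2 = ((a : ℝ) + 1) ^ 2 := by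
    intro j hj
    have hcj : c (a + j) = ((a : ℝ) + 1) * (((b : ℝ) + 1) - (j : ℝ)) := by
      rw [hc]
      by_cases h : a + j ≤ a
      · have hj0 : j = 0 := by omega
        subst hj0
        simp only [if_pos h]
        push_cast; ring
      · simp only [if_neg h]
        push_cast; ring
    have hcj1 : c (a + j + 1) = ((a : ℝ) + 1) * (((b : ℝ) + 1) - ((j : ℝ) + 1)) := by
      rw [hc]
      simp only [if_neg (show ¬ a + j + 1 ≤ a by omega)]
      push_cast; ring
    rw [hcj, hcj1]; ring
  rw [Finset.sum_congr rfl hL, Finset.sum_congr rfl hR, Finset.sum_const, Finset.sum_const]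
  have e0 : ext0 X 0 = (b : ℝ) + 1 := by
    rw [hx 0 (by omega), hc]
    norm_num
  have eab : (ext0 X (a + b)) ^ 2 = ((a : ℝ) + 1) ^ 2 := by
    rw [hx (a + b) (by omega), mul_pow, neg_pow_sq, one_mul, hc]
    simp only [if_neg (show ¬ a + b ≤ a by omega)]
    push_cast; ring
  have ea : (ext0 X a) ^ 2 = (((a : ℝ) + 1) * ((b : ℝ) + 1)) ^ 2 := by
    rw [hx a (by omega), mul_pow, neg_pow_sq, one_mul, hc]
    simp only [if_pos (le_refl a)]
    try push_cast
    try ring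
  rw [e0, eab, ea]
  simp only [card_range, nsmul_eq_mul, show a + b - a = b from by omega]
  have key : (a : ℝ) * ((b : ℝ) + 1) ^ 2 + (b : ℝ) * ((a : ℝ) + 1) ^ 2 + ((b : ℝ) + 1) ^ 2
      + ((a : ℝ) + 1) ^ 2 - (((a : ℝ) + 1) * ((b : ℝ) + 1)) ^ 2
      = ((a : ℝ) + 1) * ((b : ℝ) + 1) * (1 - (a : ℝ) * (b : ℝ)) := by ring
  rw [key]
  apply mul_neg_of_pos_of_neg
  · positivity
  · have : (2 : ℝ) ≤ (a : ℝ) * (b : ℝ) := by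
      have := hab
      push_cast [← Nat.cast_mul]
      exact_mod_cast hab
    linarith

lemma sig_eq_counts {m : Type*} [Fintype m] [DecidableEq m] {M : Matrix m m ℝ}
    (hM : M.IsHermitian) :
    sig M = ((univ.filter fun i => 0 < hM.eigenvalues i).card : ℤ)
      - ((univ.filter fun i => hM.eigenvalues i < 0).card : ℤ) := by
  classical
  unfold sig
  rw [dif_pos hM]

lemma sig_posdef {n : ℕ} {M : Matrix (Fin n) (Fin n) ℝ} (h : M.PosDef) :
    sig M = (n : ℤ) := by
  rw [sig_eq_counts h.1]
  have h1 : (univ.filter fun i => 0 < h.1.eigenvalues i) = univ :=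
    Finset.filter_true_of_mem fun i _ => h.eigenvalues_pos i
  have h2 : (univ.filter fun i => h.1.eigenvalues i < 0) = ∅ :=
    Finset.filter_false_of_mem fun i _ => not_lt.mpr (h.eigenvalues_pos i).le
  rw [h1, h2]
  simp

lemma count_pos_eq {n : ℕ} {M : Matrix (Fin n) (Fin n) ℝ} (hM : M.IsHermitian) :
    (univ.filter fun i => 0 < hM.eigenvalues i).card
      = n - (univ.filter fun i => hM.eigenvalues i ≤ 0).card := by
  have h := Finset.card_filter_add_card_filter_not
    (s := (univ : Finset (Fin n))) (p := fun i => 0 < hM.eigenvalues i)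
  have h2 : (univ.filter fun i => ¬ 0 < hM.eigenvalues i)
      = (univ.filter fun i => hM.eigenvalues i ≤ 0) := by
    apply Finset.filter_congr
    intro i _
    simp [not_lt]
  rw [h2] at h
  simp only [card_univ, Fintype.card_fin] at h
  omega

lemma sig_of_neg (a b : ℕ)
    (hM : (tri (a + b + 1) (fun i => if (i : ℕ) = a then 1 else 2)).IsHermitian)
    (hneg : ∃ i, hM.eigenvalues i < 0) :
    sig (tri (a + b + 1) (fun i => if (i : ℕ) = a then 1 else 2)) = (a : ℤ) + b - 1 := by
  obtain ⟨i0, hi0⟩ := hneg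
  rw [sig_eq_counts hM]
  have hL : (univ.filter fun i => hM.eigenvalues i ≤ 0).card = 1 := by
    refine le_antisymm (card_nonpos_le_one a b hM) ?_
    exact Finset.card_pos.mpr ⟨i0, by simp [hi0.le]⟩
  have hN : (univ.filter fun i => hM.eigenvalues i < 0).card = 1 := by
    refine le_antisymm ?_ (Finset.card_pos.mpr ⟨i0, by simp [hi0]⟩)
    calc (univ.filter fun i => hM.eigenvalues i < 0).card
        ≤ (univ.filter fun i => hM.eigenvalues i ≤ 0).card :=
          Finset.card_le_card (Finset.monotone_filter_right _ fun i _ h => h.le)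
      _ = 1 := hL
  have hP := count_pos_eq hM
  rw [hL] at hP
  rw [hP, hN]
  push_cast [show a + b + 1 - 1 = a + b from by omega]
  ring

lemma sig_psd_sing (a b : ℕ)
    (hM : (tri (a + b + 1) (fun i => if (i : ℕ) = a then 1 else 2)).IsHermitian)
    (hnn : ∀ i, 0 ≤ hM.eigenvalues i) (hz : ∃ i, hM.eigenvalues i = 0) :
    sig (tri (a + b + 1) (fun i => if (i : ℕ) = a then 1 else 2)) = (a : ℤ) + b := by
  obtain ⟨i0, hi0⟩ := hz
  rw [sig_eq_counts hM]
  have hL : (univ.filter fun i => hM.eigenvalues i ≤ 0).card = 1 := by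
    refine le_antisymm (card_nonpos_le_one a b hM) ?_
    exact Finset.card_pos.mpr ⟨i0, by simp [hi0.le]⟩
  have hN : (univ.filter fun i => hM.eigenvalues i < 0) = ∅ :=
    Finset.filter_false_of_mem fun i _ => not_lt.mpr (hnn i)
  have hP := count_pos_eq hM
  rw [hL] at hP
  rw [hP, hN]
  simp only [Finset.card_empty, Nat.cast_zero]
  push_cast [show a + b + 1 - 1 = a + b from by omega]
  ring

lemma det11 : (tri (1 + 1 + 1) (fun i => if (i : ℕ) = 1 then 1 else 2)).det = 0 := by
  rw [Matrix.det_fin_three]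
  simp [tri, Fin.ext_iff]
  norm_num

lemma psd11 : (tri (1 + 1 + 1) (fun i => if (i : ℕ) = 1 then 1 else 2)).PosSemidef := by
  refine posSemidef_iff_dotProduct_mulVec.mpr ⟨tri_herm _ _, fun x => ?_⟩
  have hstar : star x = x := funext fun i => by simp
  rw [hstar, quad 1 1 x]
  rw [Finset.sum_range_succ, Finset.sum_range_succ, Finset.sum_range_zero]
  norm_num
  nlinarith [sq_nonneg (ext0 x 0 + ext0 x 1 + ext0 x 2), sq_nonneg (ext0 x 0 - ext0 x 2)]


theorem sig_tri_a1b (a b : ℕ) :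
    sig (tri (a + b + 1) (fun i => if (i : ℕ) = a then 1 else 2)) =
      (if min a b = 0 then ((a : ℤ) + b + 1)
        else if a = 1 ∧ b = 1 then (a : ℤ) + b
        else (a : ℤ) + b - 1) ∧
    ((a : ℤ) + b + 1) ≤ 2 * sig (tri (a + b + 1) (fun i => if (i : ℕ) = a then 1 else 2)) := by
  have hM := tri_herm (a + b + 1) (fun i => if (i : ℕ) = a then 1 else 2)
  by_cases ha0 : a = 0
  · subst ha0
    have hs := sig_posdef (posdef_a0 b)
    rw [hs]
    constructor
    · rw [if_pos (by simp)]
      push_cast; ring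
    · push_cast; omega
  by_cases hb0 : b = 0
  · subst hb0
    have hs := sig_posdef (posdef_b0 a)
    rw [hs]
    constructor
    · rw [if_pos (by simp)]
      push_cast; ring
    · push_cast; omega
  by_cases h11 : a = 1 ∧ b = 1
  · obtain ⟨ha1, hb1⟩ := h11
    subst ha1; subst hb1
    have hnn : ∀ i, 0 ≤ hM.eigenvalues i := fun i => psd11.eigenvalues_nonneg i
    have hz : ∃ i, hM.eigenvalues i = 0 := by
      have hprod := hM.det_eq_prod_eigenvalues
      rw [det11] at hprod
      obtain ⟨i, _, hi⟩ := Finset.prod_eq_zero_iff.mp hprod.symm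
      exact ⟨i, by exact_mod_cast hi⟩
    have hs := sig_psd_sing 1 1 hM hnn hz
    rw [hs]
    norm_num
  · have ha1 : 1 ≤ a := by omega
    have hb1 : 1 ≤ b := by omega
    have hab : 2 ≤ a * b := by
      rcases Nat.lt_or_ge a 2 with h | h
      · have hA : a = 1 := by omega
        have hB : 2 ≤ b := by
          rcases Nat.lt_or_ge b 2 with h' | h'
          · exact absurd ⟨hA, by omega⟩ h11
          · exact h'
        subst hA; omega
      · calc 2 ≤ a * 1 := by omega
          _ ≤ a * b := Nat.mul_le_mul_left a hb1
    have hneg : ∃ i, hM.eigenvalues i < 0 := by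
      by_contra hcon
      push_neg at hcon
      have hpsd := hM.posSemidef_iff_eigenvalues_nonneg.mpr hcon
      obtain ⟨x, hx⟩ := exists_neg_vec a b ha1 hb1 hab
      have h2 := (posSemidef_iff_dotProduct_mulVec.mp hpsd).2 x
      have hstar : star x = x := funext fun i => by simp
      rw [hstar] at h2
      linarith
    have hs := sig_of_neg a b hM hneg
    rw [hs]
    have hab3 : 3 ≤ a + b := by omega
    constructor
    · rw [if_neg (by omega), if_neg h11]
    · push_cast; omega
end
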